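/- For two-colour coordination games on weighted directed graphs, a monochromatic query q (asking all queried players to play colour 0) is consistent with some pure Nash equilibrium if and only if F(s_0)(i) = 0 for all queried players i, where s_0 is the ⪯-least joint strategy (each player plays 0 if available, else 1) and F is the greedy 0-to-1 switching operator. -/

import Mathlib

/-!
Every greedy step moves a player from `0` to `1`, so the process climbs the finite lattice of
joint strategies and terminates. Since the payoff for `1` grows and the payoff for `0` shrinks as
more players play `1`, two invariants survive each step: an equilibrium lying above the current
strategy stays above it (a player that gains by switching up would gain in the equilibrium too),
and no player playing `1` would rather return to `0`. Hence `F(s₀)` is a Nash equilibrium lying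
below every Nash equilibrium, and it alone decides every monochromatic `0`-query.
-/

open Function Relation

theorem exists_reflTransGen_forall_not_of_lt {β : Type*} [Preorder β] [WellFoundedGT β]
    {r : β → β → Prop} (hr : ∀ a b, r a b → a < b) (a : β) :
    ∃ b, ReflTransGen r a b ∧ ∀ c, ¬ r b c := by
  induction a using WellFoundedGT.induction with
  | _ a ih =>
    by_cases h : ∃ c, r a c
    · obtain ⟨c, hac⟩ := h
      obtain ⟨b, hcb, hb⟩ := ih c (hr a c hac)
      exact ⟨b, .head hac hcb, hb⟩
    · exact ⟨a, .refl, not_exists.mp h⟩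

section Greedy

variable {V α : Type*} [LinearOrder α] (C : V → Finset Bool)
  (payoff : V → Bool → (V → Bool) → α)

def minProfile (i : V) : Bool :=
  if false ∈ C i then false else true

def IsNash (s : V → Bool) : Prop :=
  (∀ i, s i ∈ C i) ∧ ∀ i, ∀ c ∈ C i, payoff i c s ≤ payoff i (s i) s

/-- The paper's operator `F` runs this relation until it gets stuck; colour `0` is `false`. -/
def SwitchStep [DecidableEq V] (s s' : V → Bool) : Prop :=
  ∃ j, s j = false ∧ true ∈ C j ∧ payoff j false s < payoff j true s ∧
    s' = update s j true

variable {C payoff}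

theorem minProfile_le {s : V → Bool} (hs : ∀ i, s i ∈ C i) : minProfile C ≤ s := by
  intro i
  unfold minProfile
  split_ifs with h
  · exact Bool.false_le _
  · cases hsi : s i
    · exact absurd (hsi ▸ hs i) h
    · exact le_rfl

theorem minProfile_mem (hC : ∀ i, (C i).Nonempty) (i : V) : minProfile C i ∈ C i := by
  unfold minProfile
  split_ifs with h
  · exact h
  · obtain ⟨c, hc⟩ := hC i
    cases c
    · exact absurd hc h
    · exact hc

variable [DecidableEq V]

theorem SwitchStep.lt {s s' : V → Bool} (h : SwitchStep C payoff s s') : s < s' := by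
  obtain ⟨j, hj, -, -, rfl⟩ := h
  exact lt_update_self_iff.mpr (hj ▸ Bool.false_lt_true)

theorem mem_of_reflTransGen_minProfile (hC : ∀ i, (C i).Nonempty) {t : V → Bool}
    (ht : ReflTransGen (SwitchStep C payoff) (minProfile C) t) (i : V) : t i ∈ C i := by
  induction ht with
  | refl => exact minProfile_mem hC i
  | tail _ hstep ih =>
    obtain ⟨j, -, hjC, -, rfl⟩ := hstep
    rcases eq_or_ne i j with rfl | hij
    · simpa using hjC
    · simpa [update_of_ne hij] using ih

theorem IsNash.le_of_switchStep
    (hT : ∀ i, Monotone (payoff i true)) (hF : ∀ i, Antitone (payoff i false))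
    {s t t' : V → Bool} (hs : IsNash C payoff s) (hts : t ≤ s)
    (h : SwitchStep C payoff t t') : t' ≤ s := by
  obtain ⟨j, -, hjC, hgain, rfl⟩ := h
  refine update_le_iff.mpr ⟨?_, fun k _ => hts k⟩
  cases hsj : s j
  · have hstable := hs.2 j true hjC
    rw [hsj] at hstable
    exact absurd hstable (not_le.mpr <| (hF j hts).trans_lt (hgain.trans_le (hT j hts)))
  · exact le_rfl

theorem IsNash.le_of_reflTransGen_minProfile
    (hT : ∀ i, Monotone (payoff i true)) (hF : ∀ i, Antitone (payoff i false))
    {s t : V → Bool} (hs : IsNash C payoff s)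
    (ht : ReflTransGen (SwitchStep C payoff) (minProfile C) t) : t ≤ s := by
  induction ht with
  | refl => exact minProfile_le hs.1
  | tail _ hstep ih => exact hs.le_of_switchStep hT hF ih hstep

theorem payoff_false_le_true_of_reflTransGen_minProfile
    (hT : ∀ i, Monotone (payoff i true)) (hF : ∀ i, Antitone (payoff i false))
    {t : V → Bool} (ht : ReflTransGen (SwitchStep C payoff) (minProfile C) t) {i : V}
    (hti : t i = true) (hi : false ∈ C i) : payoff i false t ≤ payoff i true t := by
  induction ht generalizing i with
  | refl => simp [minProfile, hi] at hti
  | @tail b _ _ hstep ih =>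
    have hle := hstep.lt.le
    obtain ⟨j, -, -, hgain, rfl⟩ := hstep
    have hb : payoff i false b ≤ payoff i true b := by
      rcases eq_or_ne i j with rfl | hij
      · exact hgain.le
      · exact ih (by rwa [update_of_ne hij] at hti) hi
    exact (hF i hle).trans (hb.trans (hT i hle))

theorem isNash_of_reflTransGen_minProfile
    (hT : ∀ i, Monotone (payoff i true)) (hF : ∀ i, Antitone (payoff i false))
    (hC : ∀ i, (C i).Nonempty) {t : V → Bool}
    (ht : ReflTransGen (SwitchStep C payoff) (minProfile C) t)
    (hterm : ∀ u, ¬ SwitchStep C payoff t u) : IsNash C payoff t := by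
  refine ⟨mem_of_reflTransGen_minProfile hC ht, fun i c hc => ?_⟩
  cases hti : t i <;> cases c
  · exact le_rfl
  · exact not_lt.mp fun hgain => hterm _ ⟨i, hti, hc, hgain, rfl⟩
  · exact payoff_false_le_true_of_reflTransGen_minProfile hT hF ht hti hc
  · exact le_rfl

end Greedy

section Coordination

variable {V : Type*} [Fintype V] (E : V → V → Prop) [DecidableRel E] (w : V → V → ℚ)
  (β : V → Bool → ℤ)

def coordPayoff (i : V) (c : Bool) (s : V → Bool) : ℚ :=
  (∑ j ∈ Finset.univ.filter (fun j => E j i ∧ s j = c), w j i) + (β i c : ℚ)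

variable {E w β}

theorem coordPayoff_true_monotone (hw : ∀ i j, 0 ≤ w i j) (i : V) :
    Monotone (coordPayoff E w β i true) := by
  intro u v huv
  unfold coordPayoff
  gcongr ?_ + _
  refine Finset.sum_le_sum_of_subset_of_nonneg (fun j hj => ?_) (fun j _ _ => hw j i)
  simp only [Finset.mem_filter, Finset.mem_univ, true_and] at hj ⊢
  exact ⟨hj.1, top_le_iff.mp (hj.2.symm.trans_le (huv j))⟩

theorem coordPayoff_false_antitone (hw : ∀ i j, 0 ≤ w i j) (i : V) :
    Antitone (coordPayoff E w β i false) := by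
  intro u v huv
  unfold coordPayoff
  gcongr ?_ + _
  refine Finset.sum_le_sum_of_subset_of_nonneg (fun j hj => ?_) (fun j _ _ => hw j i)
  simp only [Finset.mem_filter, Finset.mem_univ, true_and] at hj ⊢
  exact ⟨hj.1, le_bot_iff.mp ((huv j).trans_eq hj.2)⟩

end Coordination

theorem stmt_10_general {V : Type*} [Fintype V] [DecidableEq V]
    (E : V → V → Prop) [DecidableRel E]
    (w : V → V → ℚ) (hw : ∀ i j, 0 ≤ w i j)
    (C : V → Finset Bool) (hC : ∀ i, (C i).Nonempty) (β : V → Bool → ℤ)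
    (payoff : V → Bool → (V → Bool) → ℚ)
    (hpayoff : ∀ i c s, payoff i c s =
      (∑ j ∈ Finset.univ.filter (fun j => E j i ∧ s j = c), w j i) + (β i c : ℚ))
    (Step : (V → Bool) → (V → Bool) → Prop)
    (hStep : ∀ s s', Step s s' ↔ ∃ j, s j = false ∧ true ∈ C j ∧
      payoff j false s < payoff j true s ∧ s' = Function.update s j true)
    (s₀ : V → Bool) (hs₀ : ∀ i, s₀ i = if false ∈ C i then false else true)
    (Q : Finset V) :
    (∃ s : V → Bool, (∀ i, s i ∈ C i) ∧
      (∀ i, ∀ c ∈ C i, payoff i c s ≤ payoff i (s i) s) ∧ ∀ i ∈ Q, s i = false) ↔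
    (∀ t : V → Bool, Relation.ReflTransGen Step s₀ t → (∀ u, ¬ Step t u) →
      ∀ i ∈ Q, t i = false) := by
  obtain rfl : payoff = coordPayoff E w β := funext fun i => funext fun c => funext (hpayoff i c)
  obtain rfl : Step = SwitchStep C (coordPayoff E w β) :=
    funext fun s => funext fun s' => propext (hStep s s')
  obtain rfl : s₀ = minProfile C := funext hs₀
  have hT := coordPayoff_true_monotone (E := E) (β := β) hw
  have hF := coordPayoff_false_antitone (E := E) (β := β) hw
  constructor
  · rintro ⟨s, hsC, hsN, hsQ⟩ t ht - i hi
    have hts : t ≤ s := IsNash.le_of_reflTransGen_minProfile hT hF ⟨hsC, hsN⟩ ht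
    exact le_bot_iff.mp ((hts i).trans_eq (hsQ i hi))
  · intro h
    obtain ⟨t, ht, hterm⟩ := exists_reflTransGen_forall_not_of_lt
      (r := SwitchStep C (coordPayoff E w β)) (fun _ _ => SwitchStep.lt) (minProfile C)
    obtain ⟨htC, htN⟩ := isNash_of_reflTransGen_minProfile hT hF hC ht hterm
    exact ⟨t, htC, htN, h t ht hterm⟩

/-- For two-colour coordination games on weighted directed graphs, a monochromatic query
(asking every player in `Q` to play colour `0 = false`) is consistent with some pure Nash
equilibrium iff the terminal result `F(s₀)` of the greedy `0`-to-`1` switching process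
started from the least joint strategy `s₀` assigns `0` to every queried player. -/
theorem stmt_10 {V : Type*} [Fintype V] [DecidableEq V]
    (E : V → V → Prop) [DecidableRel E]
    (w : V → V → ℚ) (hw : ∀ i j, 0 ≤ w i j)
    (C : V → Finset Bool) (hC : ∀ i, (C i).Nonempty) (β : V → Bool → ℤ)
    (payoff : V → Bool → (V → Bool) → ℚ)
    (hpayoff : ∀ i c s, payoff i c s =
      (∑ j ∈ Finset.univ.filter (fun j => E j i ∧ s j = c), w j i) + (β i c : ℚ))
    (Step : (V → Bool) → (V → Bool) → Prop)
    (hStep : ∀ s s', Step s s' ↔ ∃ j, s j = false ∧ true ∈ C j ∧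
      payoff j false s < payoff j true s ∧ s' = Function.update s j true)
    (s₀ : V → Bool) (hs₀ : ∀ i, s₀ i = if false ∈ C i then false else true)
    (Q : Finset V) (hQ : ∀ i ∈ Q, false ∈ C i) :
    (∃ s : V → Bool, (∀ i, s i ∈ C i) ∧
      (∀ i, ∀ c ∈ C i, payoff i c s ≤ payoff i (s i) s) ∧ ∀ i ∈ Q, s i = false) ↔
    (∀ t : V → Bool, Relation.ReflTransGen Step s₀ t → (∀ u, ¬ Step t u) →
      ∀ i ∈ Q, t i = false) :=
  stmt_10_general E w hw C hC β payoff hpayoff Step hStep s₀ hs₀ Q
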